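/- Let s be a string and ℓ ≥ 1 an integer with 2ℓ ≤ |s| such that the prefix s[1..2ℓ] is an order-preserving square. Then there exist a position x and an integer k ≥ 0 such that: ℓ + 1 ≤ x ≤ 2ℓ; x is a leftmost occurrence in s; x − ℓ is a leftmost occurrence in s; 2^k ≤ x < 2^{k+1}; and x is either the minimum or the maximum of the set of leftmost occurrences y of s with 2^k ≤ y < 2^{k+1}. -/
import Mathlib


/-- Strings are modelled as functions `w : ℕ → α` (1-indexed); a string of length `n`
uses positions `1..n`. `OpIso w i j ℓ` says the fragments `w[i..i+ℓ-1]` and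
`w[j..j+ℓ-1]` are order-isomorphic. -/
def OpIso {α : Type*} [LinearOrder α] (w : ℕ → α) (i j ℓ : ℕ) : Prop :=
  ∀ a b : ℕ, a < ℓ → b < ℓ → (w (i + a) ≤ w (i + b) ↔ w (j + a) ≤ w (j + b))

/-- The fragment `w[i..i+2ℓ-1]` is an order-preserving square: its two arms of length `ℓ`
are order-isomorphic but not equal as words. -/
def IsOpSquareAt {α : Type*} [LinearOrder α] (w : ℕ → α) (i ℓ : ℕ) : Prop :=
  OpIso w i (i + ℓ) ℓ ∧ ∃ a : ℕ, a < ℓ ∧ w (i + a) ≠ w (i + ℓ + a)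

/-- Position `i` is a leftmost occurrence in `w`: no earlier position carries the same character. -/
def Leftmost {α : Type*} [LinearOrder α] (w : ℕ → α) (i : ℕ) : Prop :=
  ∀ j : ℕ, 1 ≤ j → j < i → w j ≠ w i

/-- `b` is an op-border of the fragment of length `m` starting at position `i`:
its prefix of length `b` is order-isomorphic to its suffix of length `b`. -/
def OpBorderAt {α : Type*} [LinearOrder α] (w : ℕ → α) (i m b : ℕ) : Prop :=
  b ≤ m ∧ OpIso w i (i + (m - b)) b

section Aux
variable {α : Type*} [LinearOrder α]

lemma opIso_eq_iff {w : ℕ → α} {i j ℓ : ℕ} (h : OpIso w i j ℓ) {a b : ℕ}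
    (ha : a < ℓ) (hb : b < ℓ) : w (i + a) = w (i + b) ↔ w (j + a) = w (j + b) := by
  constructor <;> intro he
  · exact le_antisymm ((h a b ha hb).1 he.le) ((h b a hb ha).1 he.ge)
  · exact le_antisymm ((h a b ha hb).2 he.le) ((h b a hb ha).2 he.ge)

lemma finset_mono_id (f : α → α) (s : Finset α) :
    (∀ x ∈ s, f x ∈ s) → (∀ x ∈ s, ∀ y ∈ s, x < y → f x < f y) →
    ∀ x ∈ s, f x = x := by
  induction s using Finset.strongInduction with
  | _ s ih =>
    intro hmem hmono x hx
    have hne : s.Nonempty := ⟨x, hx⟩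
    set M := s.max' hne with hM
    have hMs : M ∈ s := s.max'_mem hne
    have hinj : Set.InjOn f s := by
      intro a ha b hb hab
      by_contra hne2
      rcases lt_or_gt_of_ne hne2 with h | h
      · exact absurd hab (ne_of_lt (hmono a ha b hb h))
      · exact absurd hab (ne_of_gt (hmono b hb a ha h))
    have hfM : f M = M := by
      by_contra hne'
      have hlt : f M < M := lt_of_le_of_ne (s.le_max' _ (hmem M hMs)) hne'
      have hsub : s.image f ⊆ s.erase M := by
        intro y hy
        rcases Finset.mem_image.mp hy with ⟨z, hz, rfl⟩
        refine Finset.mem_erase.mpr ⟨?_, hmem z hz⟩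
        rcases lt_or_eq_of_le (s.le_max' z hz) with h' | h'
        · exact ne_of_lt (lt_trans (hmono z hz M hMs h') hlt)
        · rw [h']; exact ne_of_lt hlt
      have h1 : (s.image f).card = s.card := Finset.card_image_of_injOn hinj
      have h2 : (s.image f).card ≤ (s.erase M).card := Finset.card_le_card hsub
      have h3 : (s.erase M).card < s.card := Finset.card_erase_lt_of_mem hMs
      omega
    by_cases hxM : x = M
    · rw [hxM, hfM]
    · have hxe : x ∈ s.erase M := Finset.mem_erase.mpr ⟨hxM, hx⟩
      refine ih (s.erase M) (Finset.erase_ssubset hMs) ?_ ?_ x hxe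
      · intro y hy
        have hy' := Finset.mem_of_mem_erase hy
        have hyM : y < M := lt_of_le_of_ne (s.le_max' y hy') (Finset.mem_erase.mp hy).1
        have : f y < M := by rw [← hfM]; exact hmono y hy' M hMs hyM
        exact Finset.mem_erase.mpr ⟨ne_of_lt this, hmem y hy'⟩
      · intro a ha b hb hab
        exact hmono a (Finset.mem_of_mem_erase ha) b (Finset.mem_of_mem_erase hb) hab

lemma exists_leftmost_second_arm (w : ℕ → α) (ℓ : ℕ) (hℓ : 1 ≤ ℓ)
    (hsq : IsOpSquareAt w 1 ℓ) :
    ∃ x : ℕ, ℓ + 1 ≤ x ∧ x ≤ 2 * ℓ ∧ Leftmost w x := by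
  classical
  by_contra hcon
  push_neg at hcon
  obtain ⟨hiso, a0, ha0, hne0⟩ := hsq
  -- leftmost representative of any position p ≥ 1
  have rep : ∀ p : ℕ, 1 ≤ p → ∃ j : ℕ, 1 ≤ j ∧ j ≤ p ∧ w j = w p ∧ Leftmost w j := by
    intro p hp
    have hex : ∃ j : ℕ, 1 ≤ j ∧ w j = w p := ⟨p, hp, rfl⟩
    refine ⟨Nat.find hex, (Nat.find_spec hex).1, Nat.find_le ⟨hp, rfl⟩,
      (Nat.find_spec hex).2, ?_⟩
    intro j' hj'1 hj'2 heq
    have : Nat.find hex ≤ j' := Nat.find_le ⟨hj'1, heq.trans (Nat.find_spec hex).2⟩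
    omega
  -- every second-arm character occurs in the first arm
  have key : ∀ a : ℕ, a < ℓ → ∃ b : ℕ, b < ℓ ∧ w (1 + b) = w (1 + ℓ + a) := by
    intro a ha
    obtain ⟨j, hj1, hj2, hje, hjl⟩ := rep (1 + ℓ + a) (by omega)
    have hjle : j ≤ ℓ := by
      by_contra hgt
      push_neg at hgt
      exact hcon j (by omega) (by omega) hjl
    exact ⟨j - 1, by omega, by rw [show 1 + (j - 1) = j by omega]; exact hje⟩
  -- the character map from first arm to second arm
  set s : Finset α := (Finset.range ℓ).image (fun a => w (1 + a)) with hs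
  set f : α → α := fun t =>
    if h : ∃ a, a < ℓ ∧ w (1 + a) = t then w (1 + ℓ + h.choose) else t with hf
  have feval : ∀ a : ℕ, a < ℓ → f (w (1 + a)) = w (1 + ℓ + a) := by
    intro a ha
    have h : ∃ a', a' < ℓ ∧ w (1 + a') = w (1 + a) := ⟨a, ha, rfl⟩
    rw [hf]
    simp only [dif_pos h]
    have hspec := h.choose_spec
    have := (opIso_eq_iff hiso hspec.1 ha).1 hspec.2
    simpa using this
  have hmem : ∀ x ∈ s, f x ∈ s := by
    intro x hx
    rcases Finset.mem_image.mp hx with ⟨a, ha, rfl⟩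
    rw [feval a (Finset.mem_range.mp ha)]
    obtain ⟨b, hb, hbe⟩ := key a (Finset.mem_range.mp ha)
    exact Finset.mem_image.mpr ⟨b, Finset.mem_range.mpr hb, hbe⟩
  have hmono : ∀ x ∈ s, ∀ y ∈ s, x < y → f x < f y := by
    intro x hx y hy hxy
    rcases Finset.mem_image.mp hx with ⟨a, ha, rfl⟩
    rcases Finset.mem_image.mp hy with ⟨b, hb, rfl⟩
    have ha' := Finset.mem_range.mp ha
    have hb' := Finset.mem_range.mp hb
    rw [feval a ha', feval b hb']
    have hle : w (1 + ℓ + a) ≤ w (1 + ℓ + b) := by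
      have := (hiso a b ha' hb').1 hxy.le
      simpa [add_assoc] using this
    have hne : w (1 + ℓ + a) ≠ w (1 + ℓ + b) := by
      intro he
      have := (opIso_eq_iff hiso ha' hb').2 (by simpa [add_assoc] using he)
      exact absurd this (ne_of_lt hxy)
    exact lt_of_le_of_ne hle hne
  have hid := finset_mono_id f s hmem hmono
  have : w (1 + a0) = w (1 + ℓ + a0) := by
    rw [← feval a0 ha0]
    exact (hid _ (Finset.mem_image.mpr ⟨a0, Finset.mem_range.mpr ha0, rfl⟩)).symm
  exact hne0 this

lemma leftmost_sub (w : ℕ → α) (ℓ x : ℕ) (hiso : OpIso w 1 (1 + ℓ) ℓ)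
    (h1 : ℓ + 1 ≤ x) (h2 : x ≤ 2 * ℓ) (hx : Leftmost w x) : Leftmost w (x - ℓ) := by
  intro j hj1 hj2 heq
  set a := x - ℓ - 1 with ha
  have hxa : x = 1 + ℓ + a := by omega
  have haℓ : a < ℓ := by omega
  set b := j - 1 with hb
  have hjb : j = 1 + b := by omega
  have hba : b < a := by omega
  have heq' : w (1 + b) = w (1 + a) := by
    rw [← hjb, heq]; congr 1; omega
  have := (opIso_eq_iff hiso (by omega : b < ℓ) haℓ).1 heq'
  have h2' : w (1 + ℓ + b) = w x := by
    rw [hxa]; simpa [add_assoc] using this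
  exact hx (1 + ℓ + b) (by omega) (by omega) h2'

end Aux


/-- If the prefix s[1..2ℓ] is an op-square, then there exist a position x
and k ≥ 0 with ℓ+1 ≤ x ≤ 2ℓ, x and x − ℓ leftmost occurrences, 2^k ≤ x < 2^{k+1},
and x is the minimum or the maximum of the leftmost occurrences lying in [2^k, 2^{k+1}). -/
theorem leftmost_extreme_in_group {α : Type*} [LinearOrder α]
    (w : ℕ → α) (n ℓ : ℕ) (hℓ : 1 ≤ ℓ) (h2ℓ : 2 * ℓ ≤ n)
    (hsq : IsOpSquareAt w 1 ℓ) :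
    ∃ x k : ℕ, ℓ + 1 ≤ x ∧ x ≤ 2 * ℓ ∧ Leftmost w x ∧ Leftmost w (x - ℓ) ∧
      2 ^ k ≤ x ∧ x < 2 ^ (k + 1) ∧
      ((∀ y : ℕ, 2 ^ k ≤ y → y < 2 ^ (k + 1) → Leftmost w y → x ≤ y) ∨
       (∀ y : ℕ, 2 ^ k ≤ y → y < 2 ^ (k + 1) → Leftmost w y → y ≤ x)) := by
  classical
  have hiso : OpIso w 1 (1 + ℓ) ℓ := hsq.1
  obtain ⟨x0, hx01, hx02, hx0l⟩ := exists_leftmost_second_arm w ℓ hℓ hsq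
  set k := Nat.log 2 (2 * ℓ) with hk
  have hkle : 2 ^ k ≤ 2 * ℓ := Nat.pow_log_le_self 2 (by omega)
  have hklt : 2 * ℓ < 2 ^ (k + 1) := Nat.lt_pow_succ_log_self (by norm_num) _
  have hℓlt : ℓ < 2 ^ k := by
    have : 2 ^ (k + 1) = 2 * 2 ^ k := by ring
    omega
  have hk1 : 1 ≤ k := Nat.log_pos (by norm_num) (by omega)
  by_cases hA : ∃ x : ℕ, 2 ^ k ≤ x ∧ x ≤ 2 * ℓ ∧ Leftmost w x
  · -- take the minimal leftmost position ≥ 2^k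
    have hex : ∃ x : ℕ, 2 ^ k ≤ x ∧ Leftmost w x := by
      obtain ⟨x, h1, _, h3⟩ := hA; exact ⟨x, h1, h3⟩
    set x := Nat.find hex with hxdef
    have hspec := Nat.find_spec hex
    have hxle : x ≤ 2 * ℓ := by
      obtain ⟨x', h1, h2, h3⟩ := hA
      exact le_trans (Nat.find_le ⟨h1, h3⟩) h2
    have h1 : ℓ + 1 ≤ x := by have := hspec.1; omega
    refine ⟨x, k, h1, hxle, hspec.2, leftmost_sub w ℓ x hiso h1 hxle hspec.2,
      hspec.1, by omega, Or.inl ?_⟩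
    intro y hy1 _ hy3
    exact Nat.find_le ⟨hy1, hy3⟩
  · -- take the maximal leftmost position in [ℓ+1, 2^k)
    push_neg at hA
    have hx0lt : x0 < 2 ^ k := by
      by_contra hge
      push_neg at hge
      exact hA x0 hge hx02 hx0l
    set S : Finset ℕ := (Finset.range (2 ^ k)).filter
      (fun y => ℓ + 1 ≤ y ∧ Leftmost w y) with hS
    have hx0S : x0 ∈ S := by
      rw [hS]
      exact Finset.mem_filter.mpr ⟨Finset.mem_range.mpr hx0lt, hx01, hx0l⟩
    have hSne : S.Nonempty := ⟨x0, hx0S⟩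
    set x := S.max' hSne with hxdef
    have hxS : x ∈ S := S.max'_mem hSne
    rw [hS, Finset.mem_filter, Finset.mem_range] at hxS
    obtain ⟨hxlt, hx1, hxl⟩ := hxS
    have hxle : x ≤ 2 * ℓ := by omega
    have hpow : 2 ^ (k - 1) ≤ ℓ := by
      have h : 2 ^ k = 2 * 2 ^ (k - 1) := by
        rw [← pow_succ']
        congr 1
        omega
      omega
    refine ⟨x, k - 1, hx1, hxle, hxl, leftmost_sub w ℓ x hiso hx1 hxle hxl,
      by omega, by rw [show k - 1 + 1 = k by omega]; exact hxlt, Or.inr ?_⟩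
    intro y _ hy2 hy3
    rw [show k - 1 + 1 = k by omega] at hy2
    by_cases hyℓ : ℓ + 1 ≤ y
    · exact S.le_max' y (Finset.mem_filter.mpr ⟨Finset.mem_range.mpr hy2, hyℓ, hy3⟩)
    · omega
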